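/- Let R be a commutative noetherian ring, A a finite R-algebra, I an indecomposable injective left A-module with associated prime p ⊆ R, and r ∈ R. If r ∈ p then left multiplication by r on I is locally nilpotent; if r ∉ p then left multiplication by r on I is an automorphism of I. -/

import Mathlib

/-!
An indecomposable injective module `I` is uniform: if two nonzero submodules met trivially, a
submodule maximal among those meeting one of them trivially would be closed, hence a proper
nonzero direct summand of the injective module `I`.

In a uniform module over a left noetherian ring, an endomorphism `φ` with nonzero kernel is
locally nilpotent: the annihilators of `φ ^ n y` stabilise at some `k`, and then `ker φ` meets
`A ∙ φ ^ k y` trivially, so `φ ^ k y = 0`. An injective endomorphism of an indecomposable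
injective module splits, so it is onto.

Both apply to multiplication by `r`, which is `A`-linear; whether its kernel vanishes is
decided by `r ∉ p`, since `p` is the annihilator of some `x ≠ 0`.
-/

/-- A module is indecomposable if it is nonzero and is not the direct sum of two nonzero
submodules. -/
def Module.Indecomposable (A : Type*) [Ring A] (M : Type*) [AddCommGroup M]
    [Module A M] : Prop :=
  Nontrivial M ∧ ∀ N N' : Submodule A M, IsCompl N N' → N = ⊥ ∨ N' = ⊥

open LinearMap Submodule

/-- Unlike the usual convention, the zero module counts as uniform. -/
def Module.IsUniform (A : Type*) [Ring A] (M : Type*) [AddCommGroup M] [Module A M] : Prop :=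
  ∀ N N' : Submodule A M, Disjoint N N' → N = ⊥ ∨ N' = ⊥

theorem exists_le_maximal_disjoint {α : Type*} [CompleteLattice α] [IsCompactlyGenerated α]
    {a b : α} (h : Disjoint a b) : ∃ c, a ≤ c ∧ Maximal (Disjoint · b) c :=
  zorn_le_nonempty₀ {c | Disjoint c b}
    (fun _ hc hchain _ _ => ⟨_, hchain.directedOn.disjoint_sSup_left.2 hc, fun _ => le_sSup⟩) a h

section

variable {A I : Type*} [Ring A] [AddCommGroup I] [Module A I]

theorem Module.Injective.exists_end_eq_self_and_eq_zero [Module.Injective A I]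
    {C D : Submodule A I} (h : Disjoint C D) :
    ∃ f : Module.End A I, (∀ c ∈ C, f c = c) ∧ ∀ d ∈ D, f d = 0 := by
  have hinj : Function.Injective (C.subtype.coprod D.subtype) := by
    rw [← ker_eq_bot, ker_coprod_of_disjoint_range _ _ (by simpa using h)]
    simp
  obtain ⟨f, hf⟩ := Module.Injective.out _ hinj (C.subtype ∘ₗ LinearMap.fst A C D)
  exact ⟨f, fun c hc => by simpa using hf (⟨c, hc⟩, 0), fun d hd => by simpa using hf (0, ⟨d, hd⟩)⟩

theorem disjoint_range_of_maximal_disjoint {C D : Submodule A I} (hD : Maximal (Disjoint · C) D)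
    {f : Module.End A I} (hfC : ∀ c ∈ C, f c = c) (hfD : ∀ d ∈ D, f d = 0) :
    Disjoint (range f) D := by
  rw [Submodule.disjoint_def]
  rintro _ ⟨x, rfl⟩ hfxD
  by_contra hfx
  have hxD : x ∉ D := fun hxD => hfx (hfD x hxD)
  -- `C ⊔ D` is essential: `D ⊔ A ∙ x` meets `C`, and `f` moves the meeting point into `D`.
  have hmeet : (D ⊔ A ∙ x) ⊓ C ≠ ⊥ := fun hdisj =>
    hxD (hD.2 (disjoint_iff.mpr hdisj) le_sup_left (mem_sup_right (mem_span_singleton_self x)))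
  obtain ⟨c, hc, hc0⟩ := exists_mem_ne_zero_of_ne_bot hmeet
  obtain ⟨hcDx, hcC⟩ := mem_inf.mp hc
  obtain ⟨d, hd, _, hax, rfl⟩ := mem_sup.mp hcDx
  obtain ⟨a, rfl⟩ := mem_span_singleton.mp hax
  have hcD : d + a • x ∈ D := by
    rw [← hfC _ hcC, map_add, map_smul, hfD d hd, zero_add]
    exact D.smul_mem a hfxD
  exact hc0 (Submodule.disjoint_def.mp hD.1 _ hcD hcC)

theorem Module.Injective.exists_isCompl_of_maximal_disjoint [Module.Injective A I]
    {C N : Submodule A I} (hC : Maximal (Disjoint · N) C) : ∃ D, IsCompl C D := by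
  obtain ⟨D, hND, hD⟩ := exists_le_maximal_disjoint hC.1.symm
  obtain ⟨f, hfC, hfD⟩ := Module.Injective.exists_end_eq_self_and_eq_zero hD.1.symm
  have hCf : C ≤ range f := fun c hc => ⟨c, hfC c hc⟩
  have hrange : range f = C :=
    le_antisymm (hC.2 ((disjoint_range_of_maximal_disjoint hD hfC hfD).mono_right hND) hCf) hCf
  have hidem : IsIdempotentElem f :=
    LinearMap.ext fun x => hfC _ (hrange ▸ mem_range_self f x)
  exact ⟨ker f, hrange ▸ hidem.isCompl⟩

theorem Module.Indecomposable.isUniform [Module.Injective A I]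
    (hind : Module.Indecomposable A I) : Module.IsUniform A I := by
  intro N N' h
  obtain ⟨C, hN'C, hC⟩ := exists_le_maximal_disjoint h.symm
  obtain ⟨D, hCD⟩ := Module.Injective.exists_isCompl_of_maximal_disjoint hC
  rcases hind.2 C D hCD with hC0 | hD0
  · exact Or.inr (le_bot_iff.mp (hC0 ▸ hN'C))
  · have hCtop : C = ⊤ := eq_top_of_isCompl_bot (hD0 ▸ hCD)
    exact Or.inl (top_disjoint.mp (hCtop ▸ hC.1))

theorem Module.Indecomposable.surjective_of_injective [Module.Injective A I]
    (hind : Module.Indecomposable A I) {φ : Module.End A I} (hφ : Function.Injective φ) :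
    Function.Surjective φ := by
  obtain ⟨ψ, hψ⟩ := Module.Injective.out φ hφ LinearMap.id
  have hidem : IsIdempotentElem (φ * ψ) := LinearMap.ext fun x => by simp [hψ]
  have hrange : range (φ * ψ) = range φ :=
    le_antisymm (range_comp_le_range _ _) (by rintro _ ⟨x, rfl⟩; exact ⟨φ x, by simp [hψ]⟩)
  rcases hind.2 _ _ hidem.isCompl with h | h
  · have := hind.1
    obtain ⟨x, hx⟩ := exists_ne (0 : I)
    exact absurd (hφ (by simp [range_eq_bot.mp (hrange ▸ h)] : φ x = φ 0)) hx
  · rw [← range_eq_top, ← hrange]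
    exact eq_top_of_isCompl_bot (h ▸ hidem.isCompl)

theorem Module.IsUniform.exists_pow_apply_eq_zero [IsNoetherianRing A]
    (huni : Module.IsUniform A I) {φ : Module.End A I} (hφ : ker φ ≠ ⊥) (y : I) :
    ∃ n, (φ ^ n) y = 0 := by
  let ann : ℕ →o Submodule A A :=
    ⟨fun n => ker (toSpanSingleton A I ((φ ^ n) y)), monotone_nat_of_le_succ fun n a ha => by
      simp only [mem_ker, toSpanSingleton_apply] at ha ⊢
      rw [pow_succ', Module.End.mul_apply, ← map_smul, ha, map_zero]⟩
  obtain ⟨k, hk⟩ := monotone_stabilizes_iff_noetherian.mpr inferInstance ann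
  have hdisj : Disjoint (ker φ) (A ∙ (φ ^ k) y) := by
    rw [Submodule.disjoint_def]
    intro _ hx hax
    obtain ⟨a, rfl⟩ := mem_span_singleton.mp hax
    have ha : a ∈ ann (k + 1) := by
      change a • (φ ^ (k + 1)) y = 0
      rwa [pow_succ', Module.End.mul_apply, ← map_smul]
    simpa [ann] using (hk (k + 1) k.le_succ).ge ha
  exact ⟨k, by simpa [hφ] using huni _ _ hdisj⟩

end

/-- Let `R` be a commutative noetherian ring, `A` a finite `R`-algebra, `I` an
indecomposable injective left `A`-module with associated prime `p ⊆ R` (as an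
`R`-module), and `r ∈ R`.  If `r ∈ p` then multiplication by `r` on `I` is locally
nilpotent; if `r ∉ p` then multiplication by `r` on `I` is an automorphism. -/
theorem smul_locally_nilpotent_or_bijective_of_assoc_prime
    {R A : Type*} [CommRing R] [IsNoetherianRing R] [Ring A] [Algebra R A]
    [Module.Finite R A] (I : Type*) [AddCommGroup I] [Module A I] [Module R I]
    [IsScalarTower R A I] [Module.Injective A I]
    (hind : Module.Indecomposable A I)
    (p : Ideal R) (hp : IsAssociatedPrime p I) (r : R) :
    (r ∈ p → ∀ x : I, ∃ n : ℕ, r ^ n • x = 0) ∧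
    (r ∉ p → Function.Bijective fun x : I => r • x) := by
  have : IsNoetherianRing A :=
    isNoetherian_of_tower R (isNoetherian_of_isNoetherianRing_of_finite R A)
  obtain ⟨hprime, x, rfl⟩ := isAssociatedPrime_iff.mp hp
  have hx0 : x ≠ 0 := by
    rintro rfl
    exact hprime.ne_top (by ext; simp [mem_colon_singleton])
  let φ : Module.End A I := algebraMap R _ r
  have hnil (h : ker φ ≠ ⊥) (y : I) : ∃ n, r ^ n • y = 0 := by
    simpa [φ, ← map_pow] using hind.isUniform.exists_pow_apply_eq_zero h y
  refine ⟨fun hr => hnil ((Submodule.ne_bot_iff _).2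
    ⟨x, by simpa [φ, mem_colon_singleton] using hr, hx0⟩), fun hr => ?_⟩
  have hinj : Function.Injective φ := by
    refine ker_eq_bot.mp (by_contra fun h => ?_)
    obtain ⟨n, hn⟩ := hnil h x
    exact hr (hprime.mem_of_pow_mem n (by simpa [mem_colon_singleton] using hn))
  exact ⟨hinj, hind.surjective_of_injective hinj⟩
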